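/- Let A, B ∈ Mat_n(𝕋) and w ∈ {a,b}⁺ satisfy per(A) = tr(A), per(B) = tr(B), and rk_tr(w(A,B)) = n. Then for each index i, the i-th diagonal entry of w(A,B) equals |w|_a · A_{i,i} + |w|_b · B_{i,i}, where |w|_a and |w|_b are the numbers of occurrences of the letters a and b in w. -/

import Mathlib

attribute [local instance] Classical.propDecidable

/-- The tropical (max-plus) semiring carrier: `ℝ ∪ {−∞}`. -/
abbrev Trop : Type := WithBot ℝ

/-- Tropical matrix multiplication: `(A ⊙ B)_{i,j} = max_k (A_{i,k} + B_{k,j})`. -/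
def tmul {n m p : ℕ} (A : Matrix (Fin n) (Fin m) Trop) (B : Matrix (Fin m) (Fin p) Trop) :
    Matrix (Fin n) (Fin p) Trop :=
  fun i j => Finset.univ.sup (fun k => A i k + B k j)

/-- The tropical identity matrix. -/
def tId (n : ℕ) : Matrix (Fin n) (Fin n) Trop :=
  fun i j => if i = j then (0 : Trop) else ⊥

/-- Tropical matrix power. -/
def tPow {n : ℕ} (A : Matrix (Fin n) (Fin n) Trop) : ℕ → Matrix (Fin n) (Fin n) Trop
  | 0 => tId n
  | t + 1 => tmul A (tPow A t)

/-- Weight of a permutation: `ω(π) = Σ_i A_{i,π(i)}`. -/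
def permWeight {n : ℕ} (A : Matrix (Fin n) (Fin n) Trop) (π : Equiv.Perm (Fin n)) : Trop :=
  ∑ i, A i (π i)

/-- Tropical permanent: `per(A) = max_π ω(π)`. -/
def tPer {n : ℕ} (A : Matrix (Fin n) (Fin n) Trop) : Trop :=
  Finset.univ.sup (fun π : Equiv.Perm (Fin n) => permWeight A π)

/-- Nonsingular: exactly one permutation attains the permanent. -/
def Nonsingular {n : ℕ} (A : Matrix (Fin n) (Fin n) Trop) : Prop :=
  ∃! π : Equiv.Perm (Fin n), permWeight A π = tPer A

/-- Tropical rank: the largest `k` such that `A` has a nonsingular `k × k` submatrix. -/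
noncomputable def tropRank {n : ℕ} (A : Matrix (Fin n) (Fin n) Trop) : ℕ :=
  sSup {k : ℕ | ∃ (r : Fin k → Fin n) (c : Fin k → Fin n),
    Function.Injective r ∧ Function.Injective c ∧
    Nonsingular (fun i j => A (r i) (c j))}

/-- Factor rank: the smallest `k` such that `A = B ⊙ C` with `B` of size `n × k` and `C` of
size `k × n`. -/
noncomputable def facRank {n : ℕ} (A : Matrix (Fin n) (Fin n) Trop) : ℕ :=
  sInf {k : ℕ | ∃ (B : Matrix (Fin n) (Fin k) Trop) (C : Matrix (Fin k) (Fin n) Trop),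
    A = tmul B C}

/-- Trace: `tr(A) = Σ_i A_{i,i}` in `ℝ ∪ {−∞}`. -/
def tTrace {n : ℕ} (A : Matrix (Fin n) (Fin n) Trop) : Trop := ∑ i, A i i

/-- Evaluation of a word over the alphabet `{a, b}` (with `a = true`, `b = false`) at the
pair of tropical matrices `(A, B)`, i.e. `a ↦ A`, `b ↦ B`.  (On the empty word it returns
the identity matrix; we only use it on nonempty words.) -/
def mEval {n : ℕ} (A B : Matrix (Fin n) (Fin n) Trop) : List Bool → Matrix (Fin n) (Fin n) Trop
  | [] => tId n
  | x :: w => tmul (if x then A else B) (mEval A B w)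

/-- `lcm(1, 2, …, n)`. -/
def nbar (n : ℕ) : ℕ := (Finset.Icc 1 n).lcm id

/-- A walk on the digraph `G(A)`, given by its list of visited nodes: consecutive nodes must
be joined by an arc, i.e. have weight `≠ −∞`. -/
def IsWalk {n : ℕ} (A : Matrix (Fin n) (Fin n) Trop) (p : List (Fin n)) : Prop :=
  p.Chain' (fun i j => A i j ≠ ⊥)

/-- The weight of a walk: sum of the weights of its arcs. -/
def walkWeight {n : ℕ} (A : Matrix (Fin n) (Fin n) Trop) (p : List (Fin n)) : Trop :=
  ((p.zip p.tail).map (fun q => A q.1 q.2)).sum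

/-- The set of nodes on the cycle of the permutation `τ` containing `i`. -/
noncomputable def cycFinset {n : ℕ} (τ : Equiv.Perm (Fin n)) (i : Fin n) : Finset (Fin n) :=
  Finset.univ.filter (fun j => τ.SameCycle i j)

/-- `μ_i`: the average weight of the unique cycle of `τ` containing `i`. -/
noncomputable def mu {n : ℕ} (A : Matrix (Fin n) (Fin n) Trop) (τ : Equiv.Perm (Fin n))
    (i : Fin n) : ℝ :=
  (∑ j ∈ cycFinset τ i, WithBot.unbotD 0 (A j (τ j))) / (cycFinset τ i).card

/-- Upper triangular tropical matrix: all entries below the diagonal are `−∞`. -/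
def UpperTri {n : ℕ} (A : Matrix (Fin n) (Fin n) Trop) : Prop :=
  ∀ i j : Fin n, j < i → A i j = ⊥

/-- Word substitution: replace each letter `a` (`= true`) of `w` by `w₁` and each letter
`b` (`= false`) by `w₂`. -/
def subst (w w₁ w₂ : List Bool) : List Bool :=
  w.flatMap (fun x => if x then w₁ else w₂)

/-- `k`-fold concatenation `w^k` of a word. -/
def wpow (w : List Bool) : ℕ → List Bool
  | 0 => []
  | t + 1 => w ++ wpow w t

/-- Evaluation of a word over an alphabet `α` in a semigroup `S` under the assignment
`f : α → S`; returns `none` on the empty word. -/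
def aEval {S : Type*} [Mul S] {α : Type*} (f : α → S) : List α → Option S
  | [] => none
  | x :: w => some (w.foldl (fun acc y => acc * f y) (f x))

/-!
Choosing the intermediate index `i` at every factor gives `w(A,B)_{ii} ≥ |w|_a A_{ii} + |w|_b B_{ii}`.
Conversely, full tropical rank gives `w(A,B)` a unique optimal permutation `π`. If `π` is the
unique optimum of `X ⊙ Y`, its optimal intermediate indices form a permutation `g` (were two of
them equal, swapping the corresponding rows of `π` would give a second optimum), and `π g⁻¹` is
the unique optimum of `Y`. Peeling off the letters one by one, `ω(π)` becomes a sum of weights of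
permutations of `A` and `B`, each at most the trace by (PR). Hence
`tr w(A,B) ≤ ω(π) ≤ Σ_i (|w|_a A_{ii} + |w|_b B_{ii})`, which forces equality entrywise: for
`n ≥ 2` a unique optimum is not `−∞`, so the sums are finite, and `n = 1` is immediate.
-/

def IsStrictMaxPerm {n : ℕ} (M : Matrix (Fin n) (Fin n) Trop) (π : Equiv.Perm (Fin n)) : Prop :=
  ∀ π' ≠ π, permWeight M π' < permWeight M π

lemma WithBot.eq_of_forall_le_of_sum_le {ι α : Type*} [AddCommMonoid α] [LinearOrder α]
    [IsOrderedCancelAddMonoid α] {s : Finset ι} {f g : ι → WithBot α}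
    (hfg : ∀ j ∈ s, f j ≤ g j) (hsum : ∑ j ∈ s, g j ≤ ∑ j ∈ s, f j) (hf : ∑ j ∈ s, f j ≠ ⊥)
    {i : ι} (hi : i ∈ s) : g i = f i := by
  have hrest : ∑ j ∈ s.erase i, f j ≠ ⊥ := by
    rw [Ne, WithBot.sum_eq_bot_iff] at hf ⊢
    exact fun ⟨j, hj, hj'⟩ => hf ⟨j, Finset.mem_of_mem_erase hj, hj'⟩
  refine le_antisymm ?_ (hfg i hi)
  rw [← WithBot.add_le_add_iff_right hrest]
  calc g i + ∑ j ∈ s.erase i, f j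
      ≤ g i + ∑ j ∈ s.erase i, g j :=
        by gcongr with j hj; exact hfg j (Finset.mem_of_mem_erase hj)
    _ = ∑ j ∈ s, g j := Finset.add_sum_erase s g hi
    _ ≤ ∑ j ∈ s, f j := hsum
    _ = f i + ∑ j ∈ s.erase i, f j := (Finset.add_sum_erase s f hi).symm

lemma List.count_cons_nsmul_add {α : Type*} [AddCommMonoid α] (x : Bool) (w : List Bool)
    (u v : α) :
    (x :: w).count true • u + (x :: w).count false • v
      = (if x then u else v) + (w.count true • u + w.count false • v) := by
  cases x <;> simp [succ_nsmul'] <;> abel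

section Tropical

variable {n : ℕ}

lemma permWeight_le_tPer (M : Matrix (Fin n) (Fin n) Trop) (π : Equiv.Perm (Fin n)) :
    permWeight M π ≤ tPer M :=
  Finset.le_sup (Finset.mem_univ π)

lemma permWeight_tId_le (π : Equiv.Perm (Fin n)) : permWeight (tId n) π ≤ 0 :=
  Finset.sum_nonpos fun j _ => by unfold tId; split_ifs <;> simp

lemma add_le_tmul (X Y : Matrix (Fin n) (Fin n) Trop) (i k j : Fin n) :
    X i k + Y k j ≤ tmul X Y i j :=
  Finset.le_sup (f := fun k => X i k + Y k j) (Finset.mem_univ k)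

lemma permWeight_reindex (M : Matrix (Fin n) (Fin n) Trop) (ρ γ π : Equiv.Perm (Fin n)) :
    permWeight (fun i j => M (ρ i) (γ j)) π = permWeight M (γ * π * ρ⁻¹) := by
  unfold permWeight
  rw [← Equiv.sum_comp ρ (fun j => M j ((γ * π * ρ⁻¹) j))]
  simp [Equiv.Perm.mul_apply]

lemma sum_le_permWeight_tmul (X Y : Matrix (Fin n) (Fin n) Trop) (f : Fin n → Fin n)
    (π : Equiv.Perm (Fin n)) :
    ∑ j, (X j (f j) + Y (f j) (π j)) ≤ permWeight (tmul X Y) π :=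
  Finset.sum_le_sum fun j _ => add_le_tmul X Y j (f j) (π j)

lemma permWeight_add_permWeight_le_tmul (X Y : Matrix (Fin n) (Fin n) Trop)
    (g σ : Equiv.Perm (Fin n)) :
    permWeight X g + permWeight Y σ ≤ permWeight (tmul X Y) (σ * g) := by
  refine le_trans (le_of_eq ?_) (sum_le_permWeight_tmul X Y g (σ * g))
  rw [Finset.sum_add_distrib, permWeight, permWeight, ← Equiv.sum_comp g (fun j => Y j (σ j))]
  rfl

namespace IsStrictMaxPerm

variable {M : Matrix (Fin n) (Fin n) Trop} {π : Equiv.Perm (Fin n)}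

lemma permWeight_le (h : IsStrictMaxPerm M π) (π' : Equiv.Perm (Fin n)) :
    permWeight M π' ≤ permWeight M π := by
  rcases eq_or_ne π' π with rfl | hne
  · exact le_rfl
  · exact (h π' hne).le

lemma permWeight_ne_bot [Nontrivial (Fin n)] (h : IsStrictMaxPerm M π) :
    permWeight M π ≠ ⊥ := by
  obtain ⟨π', hne⟩ := exists_ne π
  exact ne_bot_of_gt (h π' hne)

lemma reindex {ρ γ : Equiv.Perm (Fin n)} (h : IsStrictMaxPerm (fun i j => M (ρ i) (γ j)) π) :
    IsStrictMaxPerm M (γ * π * ρ⁻¹) := by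
  intro τ hτ
  have hτ' : τ = γ * (γ⁻¹ * τ * ρ) * ρ⁻¹ := by group
  rw [hτ', ← permWeight_reindex, ← permWeight_reindex]
  refine h _ fun heq => hτ ?_
  rw [hτ', heq]

lemma exists_of_tmul {X Y : Matrix (Fin n) (Fin n) Trop} (h : IsStrictMaxPerm (tmul X Y) π) :
    ∃ g σ : Equiv.Perm (Fin n), IsStrictMaxPerm Y σ ∧
      permWeight (tmul X Y) π = permWeight X g + permWeight Y σ := by
  have hargmax : ∀ j, ∃ k, tmul X Y j (π j) = X j k + Y k (π j) := fun j => by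
    obtain ⟨k, -, hk⟩ := Finset.exists_mem_eq_sup _ ⟨j, Finset.mem_univ j⟩
      (fun k => X j k + Y k (π j))
    exact ⟨k, hk⟩
  choose f hf using hargmax
  have hπ : permWeight (tmul X Y) π = ∑ j, (X j (f j) + Y (f j) (π j)) :=
    Finset.sum_congr rfl fun j _ => hf j
  have hf_inj : Function.Injective f := by
    by_contra hninj
    obtain ⟨i₁, i₂, hfi, hi⟩ := Function.not_injective_iff.mp hninj
    have hfs : ∀ j, f (Equiv.swap i₁ i₂ j) = f j := fun j => by
      rcases eq_or_ne j i₁ with rfl | h₁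
      · simp [hfi]
      rcases eq_or_ne j i₂ with rfl | h₂
      · simp [hfi]
      · rw [Equiv.swap_apply_of_ne_of_ne h₁ h₂]
    have hswap : π * Equiv.swap i₁ i₂ ≠ π := fun heq =>
      hi (Equiv.swap_eq_one_iff.mp (mul_eq_left.mp heq))
    refine (h _ hswap).not_ge (le_trans (le_of_eq ?_) (sum_le_permWeight_tmul X Y f _))
    rw [hπ, Finset.sum_add_distrib, Finset.sum_add_distrib,
      ← Equiv.sum_comp (Equiv.swap i₁ i₂) (fun j => Y (f j) ((π * Equiv.swap i₁ i₂) j))]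
    simp [hfs]
  set g := Equiv.ofBijective f hf_inj.bijective_of_finite
  have hsplit : permWeight (tmul X Y) π = permWeight X g + permWeight Y (π * g⁻¹) := by
    rw [hπ, Finset.sum_add_distrib, permWeight, permWeight,
      ← Equiv.sum_comp g (fun j => Y j ((π * g⁻¹) j))]
    simp [g]
  refine ⟨g, π * g⁻¹, fun σ' hσ' => lt_of_not_ge fun hle => ?_, hsplit⟩
  have hne : σ' * g ≠ π := fun heq => hσ' (by rw [← heq]; group)
  refine (h _ hne).not_ge ?_
  calc permWeight (tmul X Y) π = permWeight X g + permWeight Y (π * g⁻¹) := hsplit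
    _ ≤ permWeight X g + permWeight Y σ' := by gcongr
    _ ≤ permWeight (tmul X Y) (σ' * g) := permWeight_add_permWeight_le_tmul X Y g σ'

end IsStrictMaxPerm

lemma Nonsingular.exists_isStrictMaxPerm {M : Matrix (Fin n) (Fin n) Trop} (h : Nonsingular M) :
    ∃ π, IsStrictMaxPerm M π := by
  obtain ⟨π, hπ, huniq⟩ := h
  refine ⟨π, fun π' hne => lt_of_le_of_ne (hπ ▸ permWeight_le_tPer M π') fun heq => hne ?_⟩
  exact huniq π' (heq.trans hπ)

lemma exists_isStrictMaxPerm_of_tropRank_eq [NeZero n] {M : Matrix (Fin n) (Fin n) Trop}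
    (h : tropRank M = n) : ∃ π, IsStrictMaxPerm M π := by
  set S := {k : ℕ | ∃ (r : Fin k → Fin n) (c : Fin k → Fin n),
    Function.Injective r ∧ Function.Injective c ∧ Nonsingular (fun i j => M (r i) (c j))}
  have hS : sSup S = n := h
  have hbdd : BddAbove S := ⟨n, fun k ⟨r, _, hr, _⟩ => by
    simpa using Fintype.card_le_of_injective r hr⟩
  have hne : S.Nonempty := Set.nonempty_iff_ne_empty.mpr fun hempty => by
    rw [hempty, csSup_empty] at hS
    exact NeZero.ne n hS.symm
  obtain ⟨r, c, hr, hc, hN⟩ : n ∈ S := hS ▸ Nat.sSup_mem hne hbdd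
  obtain ⟨π, hπ⟩ := hN.exists_isStrictMaxPerm
  exact ⟨_, IsStrictMaxPerm.reindex (ρ := Equiv.ofBijective r hr.bijective_of_finite)
    (γ := Equiv.ofBijective c hc.bijective_of_finite) hπ⟩

lemma diag_le_mEval (A B : Matrix (Fin n) (Fin n) Trop) (w : List Bool) (j : Fin n) :
    w.count true • A j j + w.count false • B j j ≤ mEval A B w j j := by
  induction w with
  | nil => simp [mEval, tId]
  | cons x w ih =>
    have hx : (if x then A j j else B j j) = (if x then A else B) j j := by cases x <;> rfl
    rw [List.count_cons_nsmul_add, hx]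
    exact (add_le_add le_rfl ih).trans (add_le_tmul _ _ j j j)

lemma IsStrictMaxPerm.permWeight_mEval_le {A B : Matrix (Fin n) (Fin n) Trop}
    (hA : tPer A = tTrace A) (hB : tPer B = tTrace B) {w : List Bool} {π : Equiv.Perm (Fin n)}
    (h : IsStrictMaxPerm (mEval A B w) π) :
    permWeight (mEval A B w) π ≤ w.count true • tTrace A + w.count false • tTrace B := by
  induction w generalizing π with
  | nil => simpa [mEval] using permWeight_tId_le π
  | cons x w ih =>
    obtain ⟨g, σ, hσ, hsplit⟩ := IsStrictMaxPerm.exists_of_tmul h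
    have hX : permWeight (if x then A else B) g ≤ if x then tTrace A else tTrace B := by
      split_ifs
      · exact hA ▸ permWeight_le_tPer A g
      · exact hB ▸ permWeight_le_tPer B g
    rw [List.count_cons_nsmul_add]
    exact hsplit ▸ add_le_add hX (ih hσ)

end Tropical

theorem diag_entry_eval_general {n : ℕ} (A B : Matrix (Fin n) (Fin n) Trop)
    (w : List Bool)
    (hA : tPer A = tTrace A) (hB : tPer B = tTrace B)
    (hrk : tropRank (mEval A B w) = n) (i : Fin n) :
    mEval A B w i i = w.count true • A i i + w.count false • B i i := by
  have : NeZero n := ⟨i.pos.ne'⟩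
  obtain ⟨π, hπ⟩ := exists_isStrictMaxPerm_of_tropRank_eq hrk
  set d : Fin n → Trop := fun j => w.count true • A j j + w.count false • B j j
  have hbound : permWeight (mEval A B w) π ≤ ∑ j, d j := by
    simpa [d, tTrace, Finset.sum_add_distrib, Finset.sum_nsmul] using
      hπ.permWeight_mEval_le hA hB
  have hsum : ∑ j, mEval A B w j j ≤ ∑ j, d j := (hπ.permWeight_le 1).trans hbound
  rcases subsingleton_or_nontrivial (Fin n) with _ | _
  · rw [Fintype.sum_subsingleton _ i, Fintype.sum_subsingleton _ i] at hsum
    exact le_antisymm hsum (diag_le_mEval A B w i)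
  · exact WithBot.eq_of_forall_le_of_sum_le (fun j _ => diag_le_mEval A B w j) hsum
      (ne_bot_of_le_ne_bot hπ.permWeight_ne_bot hbound) (Finset.mem_univ i)

/-- diagonal entries lemma.  Under condition (PR), the `i`-th diagonal
entry of `w(A,B)` equals `|w|_a · A_{i,i} + |w|_b · B_{i,i}`. -/
theorem diag_entry_eval {n : ℕ} (A B : Matrix (Fin n) (Fin n) Trop)
    (w : List Bool) (hw : w ≠ [])
    (hA : tPer A = tTrace A) (hB : tPer B = tTrace B)
    (hrk : tropRank (mEval A B w) = n) (i : Fin n) :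
    mEval A B w i i = w.count true • A i i + w.count false • B i i :=
  diag_entry_eval_general A B w hA hB hrk i
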